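/- arXiv:1610.02542 — 8 statements merged into one kernel-verified Lean document; each statement's English description precedes it below -/
import Mathlib

section
/- Let x > y > z > 0 be positive integers. Set u1 = x/gcd(x,y), u2 = y/gcd(x,y), v1 = y/gcd(y,z), v2 = z/gcd(y,z), w1 = x/gcd(x,z), w2 = z/gcd(x,z). Then (1/√2)·(|u1−u2|/√(u1²+u2²) + |v1−v2|/√(v1²+v2²) + |w1−w2|/√(w1²+w2²)) · (u1·v1·w1)^(1/3) ≥ 3/2. -/
/-!
Because `x > y > z`, each reduced pair satisfies `u₁ > u₂ ≥ 0` in `ℕ`, so `|u₁ - u₂| ≥ 1` and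
`√(u₁² + u₂²) ≤ √2 · u₁`. The left side is thus at least
`(1/2)(1/u₁ + 1/v₁ + 1/w₁)(u₁ v₁ w₁)^(1/3)`, and AM–GM bounds this below by `3/2`.
-/

lemma inv_two_le_inv_sqrt_two_mul_abs_sub_div_sqrt {a b : ℝ} (hb : 0 ≤ b) (hab : b + 1 ≤ a) :
    a⁻¹ / 2 ≤ 1 / √2 * (|a - b| / √(a ^ 2 + b ^ 2)) := by
  have ha : 0 < a := by linarith
  have hnum : 1 ≤ |a - b| := by rw [abs_of_pos (by linarith)]; linarith
  have hden_pos : 0 < √(a ^ 2 + b ^ 2) := Real.sqrt_pos.mpr (by positivity)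
  have hden_le : √(a ^ 2 + b ^ 2) ≤ √2 * a := by
    calc √(a ^ 2 + b ^ 2) ≤ √(2 * a ^ 2) := Real.sqrt_le_sqrt (by nlinarith)
      _ = √2 * a := by rw [Real.sqrt_mul zero_le_two, Real.sqrt_sq ha.le]
  calc a⁻¹ / 2 = 1 / √2 * (1 / (√2 * a)) := by
        field_simp
        norm_num
    _ ≤ 1 / √2 * (|a - b| / √(a ^ 2 + b ^ 2)) := by
        gcongr 1 / √2 * ?_
        exact div_le_div₀ (by positivity) hnum hden_pos hden_le

lemma three_le_sum_inv_mul_rpow_prod {p q r : ℝ} (hp : 0 < p) (hq : 0 < q) (hr : 0 < r) :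
    3 ≤ (p⁻¹ + q⁻¹ + r⁻¹) * (p * q * r) ^ ((1 : ℝ) / 3) := by
  have amgm := Real.geom_mean_le_arith_mean3_weighted (w₁ := 1 / 3) (w₂ := 1 / 3) (w₃ := 1 / 3)
    (by norm_num) (by norm_num) (by norm_num) (inv_nonneg.mpr hp.le) (inv_nonneg.mpr hq.le)
    (inv_nonneg.mpr hr.le) (by norm_num)
  rw [← Real.mul_rpow (by positivity) (by positivity),
    ← Real.mul_rpow (by positivity) (by positivity)] at amgm
  have hprod : (p * q * r) ^ ((1 : ℝ) / 3) * (p⁻¹ * q⁻¹ * r⁻¹) ^ ((1 : ℝ) / 3) = 1 := by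
    rw [← Real.mul_rpow (by positivity) (by positivity)]
    field_simp
    exact Real.one_rpow _
  have hT : 0 ≤ (p * q * r) ^ ((1 : ℝ) / 3) := by positivity
  nlinarith

lemma Nat.div_gcd_lt_div_gcd {a b : ℕ} (hba : b < a) : b / a.gcd b < a / a.gcd b :=
  Nat.div_lt_div_of_lt_of_dvd (Nat.gcd_dvd_left a b) hba

theorem stmt_0_general (x y z u1 u2 v1 v2 w1 w2 : ℕ)
    (hzy : z < y) (hyx : y < x)
    (hu1 : u1 = x / Nat.gcd x y) (hu2 : u2 = y / Nat.gcd x y)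
    (hv1 : v1 = y / Nat.gcd y z) (hv2 : v2 = z / Nat.gcd y z)
    (hw1 : w1 = x / Nat.gcd x z) (hw2 : w2 = z / Nat.gcd x z) :
    (1 / Real.sqrt 2) *
      (|(u1 : ℝ) - u2| / Real.sqrt ((u1 : ℝ) ^ 2 + (u2 : ℝ) ^ 2)
        + |(v1 : ℝ) - v2| / Real.sqrt ((v1 : ℝ) ^ 2 + (v2 : ℝ) ^ 2)
        + |(w1 : ℝ) - w2| / Real.sqrt ((w1 : ℝ) ^ 2 + (w2 : ℝ) ^ 2)) *
      ((u1 * v1 * w1 : ℕ) : ℝ) ^ ((1 : ℝ) / 3) ≥ 3 / 2 := by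
  have gap {a b : ℕ} (hab : b < a) : (a : ℝ)⁻¹ / 2 ≤ 1 / √2 * (|(a : ℝ) - b| / √(a ^ 2 + b ^ 2)) :=
    inv_two_le_inv_sqrt_two_mul_abs_sub_div_sqrt (Nat.cast_nonneg b) (by exact_mod_cast hab)
  have hu : u2 < u1 := hu1 ▸ hu2 ▸ Nat.div_gcd_lt_div_gcd hyx
  have hv : v2 < v1 := hv1 ▸ hv2 ▸ Nat.div_gcd_lt_div_gcd hzy
  have hw : w2 < w1 := hw1 ▸ hw2 ▸ Nat.div_gcd_lt_div_gcd (hzy.trans hyx)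
  have amgm := three_le_sum_inv_mul_rpow_prod (p := u1) (q := v1) (r := w1)
    (by exact_mod_cast hu.pos) (by exact_mod_cast hv.pos) (by exact_mod_cast hw.pos)
  have hT : 0 ≤ ((u1 : ℝ) * v1 * w1) ^ ((1 : ℝ) / 3) := by positivity
  push_cast
  rw [mul_add, mul_add]
  nlinarith [gap hu, gap hv, gap hw]

/-- For integers x > y > z > 0, the projective distance from [x:y:z] to [1:1:1]
times the cube root of the anticanonical height u1*v1*w1 is at least 3/2. -/
theorem stmt_0 (x y z u1 u2 v1 v2 w1 w2 : ℕ)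
    (hz : 0 < z) (hzy : z < y) (hyx : y < x)
    (hu1 : u1 = x / Nat.gcd x y) (hu2 : u2 = y / Nat.gcd x y)
    (hv1 : v1 = y / Nat.gcd y z) (hv2 : v2 = z / Nat.gcd y z)
    (hw1 : w1 = x / Nat.gcd x z) (hw2 : w2 = z / Nat.gcd x z) :
    (1 / Real.sqrt 2) *
      (|(u1 : ℝ) - u2| / Real.sqrt ((u1 : ℝ) ^ 2 + (u2 : ℝ) ^ 2)
        + |(v1 : ℝ) - v2| / Real.sqrt ((v1 : ℝ) ^ 2 + (v2 : ℝ) ^ 2)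
        + |(w1 : ℝ) - w2| / Real.sqrt ((w1 : ℝ) ^ 2 + (w2 : ℝ) ^ 2)) *
      ((u1 * v1 * w1 : ℕ) : ℝ) ^ ((1 : ℝ) / 3) ≥ 3 / 2 :=
  stmt_0_general x y z u1 u2 v1 v2 w1 w2 hzy hyx hu1 hu2 hv1 hv2 hw1 hw2
end

section
/- Let x, y, z be positive integers with gcd(x,y,z) = 1, and define H(x,y,z) = (max(x,y)·max(y,z)·max(x,z))/(gcd(x,y)·gcd(y,z)·gcd(x,z)). Let d1 = gcd(y,z), d2 = gcd(x,z), d3 = gcd(x,y). Then H applied to the reduced representative (yz/(d1·d2·d3), xz/(d1·d2·d3), xy/(d1·d2·d3)) of the Cremona image (yz, xz, xy) equals H(x,y,z). -/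
/-- Anticanonical height of a primitive triple of positive integers. -/
def delPezzoHeight (a b c : ℕ) : ℕ :=
  max a b * max b c * max a c / (Nat.gcd a b * Nat.gcd b c * Nat.gcd a c)

private lemma max_mul_right' (a b c : ℕ) : max (a * c) (b * c) = max a b * c := by
  rcases le_total a b with h | h
  · rw [max_eq_right (Nat.mul_le_mul_right c h), max_eq_right h]
  · rw [max_eq_left (Nat.mul_le_mul_right c h), max_eq_left h]

/-- The Cremona transformation (x,y,z) ↦ (yz,xz,xy), reduced by d1·d2·d3, preserves
the anticanonical height. -/
theorem stmt_2 (x y z : ℕ) (hx : 0 < x) (hy : 0 < y) (hz : 0 < z)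
    (hcop : Nat.gcd (Nat.gcd x y) z = 1)
    (d1 d2 d3 : ℕ) (hd1 : d1 = Nat.gcd y z) (hd2 : d2 = Nat.gcd x z)
    (hd3 : d3 = Nat.gcd x y) :
    delPezzoHeight (y * z / (d1 * d2 * d3)) (x * z / (d1 * d2 * d3))
        (x * y / (d1 * d2 * d3))
      = delPezzoHeight x y z := by
  have gcdpos : ∀ a b : ℕ, 0 < a → 0 < Nat.gcd a b := fun a b ha =>
    Nat.pos_of_ne_zero (fun h => by rcases Nat.gcd_eq_zero_iff.mp h with ⟨h1, h2⟩; omega)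
  have hd1pos : 0 < d1 := by rw [hd1]; exact gcdpos _ _ hy
  have hd2pos : 0 < d2 := by rw [hd2]; exact gcdpos _ _ hx
  have hd3pos : 0 < d3 := by rw [hd3]; exact gcdpos _ _ hx
  -- pairwise coprimality of d1, d2, d3
  have h23 : Nat.Coprime d2 d3 := by
    have h : Nat.gcd d2 d3 ∣ Nat.gcd (Nat.gcd x y) z :=
      Nat.dvd_gcd ((Nat.gcd_dvd_right d2 d3).trans (hd3 ▸ dvd_refl _))
        ((Nat.gcd_dvd_left d2 d3).trans (hd2 ▸ Nat.gcd_dvd_right x z))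
    exact Nat.eq_one_of_dvd_one (hcop ▸ h)
  have h13 : Nat.Coprime d1 d3 := by
    have h : Nat.gcd d1 d3 ∣ Nat.gcd (Nat.gcd x y) z :=
      Nat.dvd_gcd ((Nat.gcd_dvd_right d1 d3).trans (hd3 ▸ dvd_refl _))
        ((Nat.gcd_dvd_left d1 d3).trans (hd1 ▸ Nat.gcd_dvd_right y z))
    exact Nat.eq_one_of_dvd_one (hcop ▸ h)
  have h12 : Nat.Coprime d1 d2 := by
    have h : Nat.gcd d1 d2 ∣ Nat.gcd (Nat.gcd x y) z :=
      Nat.dvd_gcd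
        (Nat.dvd_gcd ((Nat.gcd_dvd_right d1 d2).trans (hd2 ▸ Nat.gcd_dvd_left x z))
          ((Nat.gcd_dvd_left d1 d2).trans (hd1 ▸ Nat.gcd_dvd_left y z)))
        ((Nat.gcd_dvd_left d1 d2).trans (hd1 ▸ Nat.gcd_dvd_right y z))
    exact Nat.eq_one_of_dvd_one (hcop ▸ h)
  -- factorizations
  obtain ⟨x₀, hxE⟩ : d2 * d3 ∣ x :=
    Nat.Coprime.mul_dvd_of_dvd_of_dvd h23 (hd2 ▸ Nat.gcd_dvd_left x z) (hd3 ▸ Nat.gcd_dvd_left x y)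
  obtain ⟨y₀, hyE⟩ : d1 * d3 ∣ y :=
    Nat.Coprime.mul_dvd_of_dvd_of_dvd h13 (hd1 ▸ Nat.gcd_dvd_left y z) (hd3 ▸ Nat.gcd_dvd_right x y)
  obtain ⟨z₀, hzE⟩ : d1 * d2 ∣ z :=
    Nat.Coprime.mul_dvd_of_dvd_of_dvd h12 (hd1 ▸ Nat.gcd_dvd_right y z) (hd2 ▸ Nat.gcd_dvd_right x z)
  have hx0 : 0 < x₀ := Nat.pos_of_ne_zero (by rintro rfl; rw [mul_zero] at hxE; omega)
  have hy0 : 0 < y₀ := Nat.pos_of_ne_zero (by rintro rfl; rw [mul_zero] at hyE; omega)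
  have hz0 : 0 < z₀ := Nat.pos_of_ne_zero (by rintro rfl; rw [mul_zero] at hzE; omega)
  -- key coprimalities from the gcd conditions
  have c3 : Nat.gcd (d2 * x₀) (d1 * y₀) = 1 := by
    have h : Nat.gcd (d3 * (d2 * x₀)) (d3 * (d1 * y₀)) = d3 * Nat.gcd (d2 * x₀) (d1 * y₀) :=
      Nat.gcd_mul_left _ _ _
    rw [show d3 * (d2 * x₀) = x by rw [hxE]; ring, show d3 * (d1 * y₀) = y by rw [hyE]; ring,
      ← hd3] at h
    exact Nat.eq_of_mul_eq_mul_left hd3pos (by omega)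
  have c1 : Nat.gcd (d3 * y₀) (d2 * z₀) = 1 := by
    have h : Nat.gcd (d1 * (d3 * y₀)) (d1 * (d2 * z₀)) = d1 * Nat.gcd (d3 * y₀) (d2 * z₀) :=
      Nat.gcd_mul_left _ _ _
    rw [show d1 * (d3 * y₀) = y by rw [hyE]; ring, show d1 * (d2 * z₀) = z by rw [hzE]; ring,
      ← hd1] at h
    exact Nat.eq_of_mul_eq_mul_left hd1pos (by omega)
  have c2 : Nat.gcd (d3 * x₀) (d1 * z₀) = 1 := by
    have h : Nat.gcd (d2 * (d3 * x₀)) (d2 * (d1 * z₀)) = d2 * Nat.gcd (d3 * x₀) (d1 * z₀) :=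
      Nat.gcd_mul_left _ _ _
    rw [show d2 * (d3 * x₀) = x by rw [hxE]; ring, show d2 * (d1 * z₀) = z by rw [hzE]; ring,
      ← hd2] at h
    exact Nat.eq_of_mul_eq_mul_left hd2pos (by omega)
  -- reduced coordinates
  have hDpos : 0 < d1 * d2 * d3 := by positivity
  have hA : y * z / (d1 * d2 * d3) = d1 * y₀ * z₀ := by
    rw [show y * z = (d1 * d2 * d3) * (d1 * y₀ * z₀) by rw [hyE, hzE]; ring,
      Nat.mul_div_cancel_left _ hDpos]
  have hB : x * z / (d1 * d2 * d3) = d2 * x₀ * z₀ := by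
    rw [show x * z = (d1 * d2 * d3) * (d2 * x₀ * z₀) by rw [hxE, hzE]; ring,
      Nat.mul_div_cancel_left _ hDpos]
  have hC : x * y / (d1 * d2 * d3) = d3 * x₀ * y₀ := by
    rw [show x * y = (d1 * d2 * d3) * (d3 * x₀ * y₀) by rw [hxE, hyE]; ring,
      Nat.mul_div_cancel_left _ hDpos]
  rw [hA, hB, hC]
  unfold delPezzoHeight
  -- gcds of the image triple
  have e1 : Nat.gcd (d1 * y₀ * z₀) (d2 * x₀ * z₀) = z₀ := by
    rw [Nat.gcd_mul_right, Nat.gcd_comm, c3, one_mul]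
  have e2 : Nat.gcd (d2 * x₀ * z₀) (d3 * x₀ * y₀) = x₀ := by
    rw [show d2 * x₀ * z₀ = d2 * z₀ * x₀ by ring, show d3 * x₀ * y₀ = d3 * y₀ * x₀ by ring,
      Nat.gcd_mul_right, Nat.gcd_comm, c1, one_mul]
  have e3 : Nat.gcd (d1 * y₀ * z₀) (d3 * x₀ * y₀) = y₀ := by
    rw [show d1 * y₀ * z₀ = d1 * z₀ * y₀ by ring, show d3 * x₀ * y₀ = d3 * x₀ * y₀ by ring,
      Nat.gcd_mul_right, Nat.gcd_comm, c2, one_mul]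
  -- maxima of the image triple
  have m1 : max (d1 * y₀ * z₀) (d2 * x₀ * z₀) = max (d1 * y₀) (d2 * x₀) * z₀ :=
    max_mul_right' _ _ _
  have m2 : max (d2 * x₀ * z₀) (d3 * x₀ * y₀) = max (d2 * z₀) (d3 * y₀) * x₀ := by
    rw [show d2 * x₀ * z₀ = d2 * z₀ * x₀ by ring, show d3 * x₀ * y₀ = d3 * y₀ * x₀ by ring,
      max_mul_right']
  have m3 : max (d1 * y₀ * z₀) (d3 * x₀ * y₀) = max (d1 * z₀) (d3 * x₀) * y₀ := by
    rw [show d1 * y₀ * z₀ = d1 * z₀ * y₀ by ring, max_mul_right']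
  -- components of the original triple
  have f1 : max x y = max (d1 * y₀) (d2 * x₀) * d3 := by
    rw [show x = d2 * x₀ * d3 by rw [hxE]; ring, show y = d1 * y₀ * d3 by rw [hyE]; ring,
      max_mul_right', max_comm]
  have f2 : max y z = max (d2 * z₀) (d3 * y₀) * d1 := by
    rw [show y = d3 * y₀ * d1 by rw [hyE]; ring, show z = d2 * z₀ * d1 by rw [hzE]; ring,
      max_mul_right', max_comm]
  have f3 : max x z = max (d1 * z₀) (d3 * x₀) * d2 := by
    rw [show x = d3 * x₀ * d2 by rw [hxE]; ring, show z = d1 * z₀ * d2 by rw [hzE]; ring,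
      max_mul_right', max_comm]
  rw [e1, e2, e3, m1, m2, m3, f1, f2, f3, ← hd1, ← hd2, ← hd3]
  generalize max (d1 * y₀) (d2 * x₀) = M3
  generalize max (d2 * z₀) (d3 * y₀) = M1
  generalize max (d1 * z₀) (d3 * x₀) = M2
  rw [show M3 * z₀ * (M1 * x₀) * (M2 * y₀) = (z₀ * x₀ * y₀) * (M3 * M1 * M2) by ring,
    Nat.mul_div_cancel_left _ (by positivity),
    show M3 * d3 * (M1 * d1) * (M2 * d2) = (d3 * d1 * d2) * (M3 * M1 * M2) by ring,
    Nat.mul_div_cancel_left _ (by positivity)]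
end

section
/- Let x, y, z be positive integers with x > y > z and gcd(x,y,z) = 1. Set d1 = gcd(y,z), d2 = gcd(x,z), d3 = gcd(x,y), d4 = gcd(x−z, y−z). Let X' = yz/(d1 d2 d3), Y' = xz/(d1 d2 d3), Z' = xy/(d1 d2 d3) be the reduced Cremona-image coordinates. Then gcd(Z'−X', Z'−Y') = d4, i.e. the parameter u is preserved by the Cremona transformation: gcd(y(x−z)/(d1 d2 d3), x(y−z)/(d1 d2 d3)) = gcd(x−z, y−z). -/
/-!
Both sides are compared prime by prime. Writing `α, β, γ, s, t` for the `p`-adic valuations of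
`x, y, z, x - z, y - z`, the ultrametric inequality applied to `x = z + (x - z)` and
`y = z + (y - z)` says that in each of the triples `(α, γ, s)` and `(β, γ, t)` the smallest value
is attained twice, and `gcd (x, y, z) = 1` says `min (α, β, γ) = 0`. Under these constraints
`min (β + s, α + t) = min (β, γ) + min (α, γ) + min (α, β) + min (s, t)`, which is the identity
`gcd (y (x - z), x (y - z)) = d₁ d₂ d₃ d₄`; dividing it by `d₁ d₂ d₃` gives the theorem.
-/

namespace Nat

lemma min_factorization_le_factorization_add {p a b : ℕ} (hp : p.Prime) (hab : a + b ≠ 0) :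
    min (a.factorization p) (b.factorization p) ≤ (a + b).factorization p := by
  rw [← hp.pow_dvd_iff_le_factorization hab]
  exact dvd_add ((pow_dvd_pow p (min_le_left _ _)).trans (ordProj_dvd a p))
    ((pow_dvd_pow p (min_le_right _ _)).trans (ordProj_dvd b p))

lemma min_factorization_le_factorization_sub {p a b : ℕ} (hp : p.Prime) (hab : a - b ≠ 0) :
    min (a.factorization p) (b.factorization p) ≤ (a - b).factorization p := by
  rw [← hp.pow_dvd_iff_le_factorization hab]
  exact Nat.dvd_sub ((pow_dvd_pow p (min_le_left _ _)).trans (ordProj_dvd a p))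
    ((pow_dvd_pow p (min_le_right _ _)).trans (ordProj_dvd b p))

lemma factorization_sub_triangle {p a b : ℕ} (hp : p.Prime) (ha : a ≠ 0) (hab : a < b) :
    min (a.factorization p) ((b - a).factorization p) ≤ b.factorization p ∧
    min (a.factorization p) (b.factorization p) ≤ (b - a).factorization p ∧
    min (b.factorization p) ((b - a).factorization p) ≤ a.factorization p := by
  refine ⟨?_, ?_, ?_⟩
  · simpa [Nat.add_sub_cancel' hab.le] using
      min_factorization_le_factorization_add (a := a) (b := b - a) hp (by omega)
  · simpa [min_comm] using min_factorization_le_factorization_sub (a := b) (b := a) hp (by omega)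
  · simpa [Nat.sub_sub_self hab.le] using
      min_factorization_le_factorization_sub (a := b) (b := b - a) hp (by omega)

lemma sub_div_of_dvd (a : ℕ) {b c : ℕ} (h : c ∣ b) : (a - b) / c = a / c - b / c := by
  obtain ⟨k, rfl⟩ := h
  rcases c.eq_zero_or_pos with rfl | hc
  · simp
  · rw [Nat.sub_mul_div, Nat.mul_div_cancel_left _ hc]

lemma gcd_mul_gcd_dvd_of_gcd_gcd_eq_one {x y z : ℕ} (h : gcd (gcd x y) z = 1) :
    gcd y z * gcd x z ∣ z := by
  have hcop : Coprime (gcd y z) (gcd x z) := Nat.dvd_one.mp <| h ▸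
    Nat.dvd_gcd
      (Nat.dvd_gcd ((gcd_dvd_right _ _).trans (gcd_dvd_left x z))
        ((gcd_dvd_left _ _).trans (gcd_dvd_left y z)))
      ((gcd_dvd_left _ _).trans (gcd_dvd_right y z))
  exact hcop.mul_dvd_of_dvd_of_dvd (gcd_dvd_right y z) (gcd_dvd_right x z)

lemma gcd_mul_sub_mul_sub {x y z : ℕ} (hz : 0 < z) (hzx : z < x) (hzy : z < y)
    (h : gcd (gcd x y) z = 1) :
    gcd (y * (x - z)) (x * (y - z)) = gcd y z * gcd x z * gcd x y * gcd (x - z) (y - z) := by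
  have hx : x ≠ 0 := by omega
  have hy : y ≠ 0 := by omega
  have hs : x - z ≠ 0 := by omega
  have ht : y - z ≠ 0 := by omega
  refine eq_of_factorization_eq (gcd_ne_zero_left (mul_ne_zero hy hs))
    (by simp [gcd_eq_zero_iff, hx, hy, hs]) fun p => ?_
  by_cases hp : p.Prime
  · have hmin := congrArg (·.factorization p) h
    simp only [factorization_gcd (gcd_ne_zero_left hx) hz.ne', factorization_gcd hx hy,
      factorization_one, Finsupp.inf_apply, Finsupp.coe_zero, Pi.zero_apply] at hmin
    have hxz := factorization_sub_triangle hp hz.ne' hzx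
    have hyz := factorization_sub_triangle hp hz.ne' hzy
    simp only [factorization_gcd, factorization_mul, Finsupp.inf_apply, Finsupp.coe_add,
      Pi.add_apply, ne_eq, _root_.mul_eq_zero, gcd_eq_zero_iff, hx, hy, hs, ht, hz.ne', or_self,
      and_self, not_false_eq_true]
    omega
  · simp [factorization_eq_zero_of_not_prime _ hp]

end Nat

/-- The parameter u = gcd(x−z, y−z) is preserved by the Cremona transformation. -/
theorem stmt_4 (x y z : ℕ) (hz : 0 < z) (hzy : z < y) (hyx : y < x)
    (hcop : Nat.gcd (Nat.gcd x y) z = 1)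
    (d1 d2 d3 d4 X' Y' Z' : ℕ)
    (hd1 : d1 = Nat.gcd y z) (hd2 : d2 = Nat.gcd x z) (hd3 : d3 = Nat.gcd x y)
    (hd4 : d4 = Nat.gcd (x - z) (y - z))
    (hX : X' = y * z / (d1 * d2 * d3)) (hY : Y' = x * z / (d1 * d2 * d3))
    (hZ : Z' = x * y / (d1 * d2 * d3)) :
    Nat.gcd (Z' - X') (Z' - Y') = d4 ∧
    Nat.gcd (y * (x - z) / (d1 * d2 * d3)) (x * (y - z) / (d1 * d2 * d3))
      = Nat.gcd (x - z) (y - z) := by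
  subst hd1 hd2 hd3 hd4 hX hY hZ
  set g := Nat.gcd y z * Nat.gcd x z * Nat.gcd x y
  have hkey := Nat.gcd_mul_sub_mul_sub hz (hzy.trans hyx) hzy hcop
  have hdvd := Nat.gcd_mul_gcd_dvd_of_gcd_gcd_eq_one hcop
  have hgyz : g ∣ y * z := mul_comm z y ▸ mul_dvd_mul hdvd (Nat.gcd_dvd_right x y)
  have hgxz : g ∣ x * z := mul_comm z x ▸ mul_dvd_mul hdvd (Nat.gcd_dvd_left x y)
  have hg : 0 < g := Nat.pos_of_dvd_of_pos hgyz (Nat.mul_pos (hz.trans hzy) hz)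
  have hgcd : g ∣ Nat.gcd (y * (x - z)) (x * (y - z)) := Dvd.intro _ hkey.symm
  have hquot : Nat.gcd (y * (x - z) / g) (x * (y - z) / g) = Nat.gcd (x - z) (y - z) := by
    rw [Nat.gcd_div (hgcd.trans (Nat.gcd_dvd_left _ _)) (hgcd.trans (Nat.gcd_dvd_right _ _)),
      hkey, Nat.mul_div_cancel_left _ hg]
  refine ⟨?_, hquot⟩
  rw [← Nat.sub_div_of_dvd _ hgyz, ← Nat.sub_div_of_dvd _ hgxz, mul_comm x y, ← Nat.mul_sub, mul_comm y x, ← Nat.mul_sub, hquot]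
end

section
/- Let x > y > z > 0 be integers with gcd(x,y,z)=1, and set d1 = gcd(y,z), d2 = gcd(x,z), d3 = gcd(x,y), d4 = gcd(x−z,y−z), e1 = (y−z)/(d1 d4), e2 = (x−z)/(d2 d4), e3 = (x−y)/(d3 d4). For the Cremona image with reduced coordinates X' = yz/(d1 d2 d3), Y' = xz/(d1 d2 d3), Z' = xy/(d1 d2 d3), define e1' = (Y'−X')/(gcd(X',Y')·d4), e2' = (Z'−X')/(gcd(X',Z')·d4), e3' = (Z'−Y')/(gcd(Y',Z')·d4). Then (e1', e2', e3') = (e3, e2, e1). -/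
/-!
With `p = gcd v w`, `q = gcd u w`, `r = gcd u v` pairwise coprime (as `gcd u v w = 1`), write
`u = q r a`, `v = p r b`, `w = p q c`. The reduced Cremona coordinates are then
`u w / (p q r) = c q a` and `v w / (p q r) = c p b`, and `gcd (q a) (p b) = 1`, so both the
Cremona-side difference divided by its gcd and `(u - v) / gcd u v` equal `q a - p b`.
Each of the three identities is this computation for a permutation of `(x, y, z)`.
-/

theorem Nat.mul_sub_div_mul_left (k m n d : ℕ) (hk : 0 < k) :
    (k * m - k * n) / (k * d) = (m - n) / d := by
  rw [← Nat.mul_sub, Nat.mul_div_mul_left _ _ hk]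

theorem Nat.exists_eq_gcd_mul_gcd_mul_of_gcd_gcd_eq_one {u v w : ℕ}
    (h : Nat.gcd (Nat.gcd u v) w = 1) :
    ∃ a b c, u = Nat.gcd u w * Nat.gcd u v * a ∧ v = Nat.gcd v w * Nat.gcd u v * b ∧
      w = Nat.gcd v w * Nat.gcd u w * c := by
  have hqr : Nat.Coprime (Nat.gcd u w) (Nat.gcd u v) := by
    simpa [Nat.Coprime, Nat.gcd_comm, Nat.gcd_left_comm, Nat.gcd_assoc] using h
  have hpr : Nat.Coprime (Nat.gcd v w) (Nat.gcd u v) := by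
    simpa [Nat.Coprime, Nat.gcd_comm, Nat.gcd_left_comm, Nat.gcd_assoc] using h
  have hpq : Nat.Coprime (Nat.gcd v w) (Nat.gcd u w) := by
    simpa [Nat.Coprime, Nat.gcd_comm, Nat.gcd_left_comm, Nat.gcd_assoc] using h
  obtain ⟨a, ha⟩ := hqr.mul_dvd_of_dvd_of_dvd (Nat.gcd_dvd_left u w) (Nat.gcd_dvd_left u v)
  obtain ⟨b, hb⟩ := hpr.mul_dvd_of_dvd_of_dvd (Nat.gcd_dvd_left v w) (Nat.gcd_dvd_right u v)
  obtain ⟨c, hc⟩ := hpq.mul_dvd_of_dvd_of_dvd (Nat.gcd_dvd_right v w) (Nat.gcd_dvd_right u w)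
  exact ⟨a, b, c, ha, hb, hc⟩

theorem cremona_sub_div_gcd_mul_eq {u v w D : ℕ} (hu : 0 < u) (hw : 0 < w)
    (h : Nat.gcd (Nat.gcd u v) w = 1) (hD : D = Nat.gcd v w * Nat.gcd u w * Nat.gcd u v)
    (d : ℕ) :
    (u * w / D - v * w / D) / (Nat.gcd (v * w / D) (u * w / D) * d) =
      (u - v) / (Nat.gcd u v * d) := by
  obtain ⟨a, b, c, ha, hb, hc⟩ := Nat.exists_eq_gcd_mul_gcd_mul_of_gcd_gcd_eq_one h
  set p := Nat.gcd v w
  set q := Nat.gcd u w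
  set r := Nat.gcd u v
  subst hD
  have hr : 0 < r := Nat.gcd_pos_of_pos_left v hu
  have hD0 : 0 < p * q * r := by positivity
  have hc0 : 0 < c := Nat.pos_of_mul_pos_left (hc ▸ hw)
  have hu' : u = r * (q * a) := by rw [ha]; ring
  have hv' : v = r * (p * b) := by rw [hb]; ring
  have hab : Nat.gcd (q * a) (p * b) = 1 := by
    apply Nat.eq_of_mul_eq_mul_left hr
    rw [← Nat.gcd_mul_left, ← hu', ← hv', mul_one]
  have huw : u * w / (p * q * r) = c * (q * a) := by
    rw [ha, hc, show q * r * a * (p * q * c) = p * q * r * (c * (q * a)) by ring]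
    exact Nat.mul_div_cancel_left _ hD0
  have hvw : v * w / (p * q * r) = c * (p * b) := by
    rw [hb, hc, show p * r * b * (p * q * c) = p * q * r * (c * (p * b)) by ring]
    exact Nat.mul_div_cancel_left _ hD0
  rw [huw, hvw, Nat.gcd_mul_left, Nat.gcd_comm, hab, mul_one,
    Nat.mul_sub_div_mul_left _ _ _ _ hc0, hu', hv', Nat.mul_sub_div_mul_left _ _ _ _ hr]

theorem stmt_5_general (x y z : ℕ) (hz : 0 < z) (hzy : z < y) (hyx : y < x)
    (hcop : Nat.gcd (Nat.gcd x y) z = 1)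
    (d1 d2 d3 d4 e1 e2 e3 X' Y' Z' e1' e2' e3' : ℕ)
    (hd1 : d1 = Nat.gcd y z) (hd2 : d2 = Nat.gcd x z) (hd3 : d3 = Nat.gcd x y)
    (he1 : e1 = (y - z) / (d1 * d4)) (he2 : e2 = (x - z) / (d2 * d4))
    (he3 : e3 = (x - y) / (d3 * d4))
    (hX : X' = y * z / (d1 * d2 * d3)) (hY : Y' = x * z / (d1 * d2 * d3))
    (hZ : Z' = x * y / (d1 * d2 * d3))
    (he1' : e1' = (Y' - X') / (Nat.gcd X' Y' * d4))
    (he2' : e2' = (Z' - X') / (Nat.gcd X' Z' * d4))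
    (he3' : e3' = (Z' - Y') / (Nat.gcd Y' Z' * d4)) :
    e1' = e3 ∧ e2' = e2 ∧ e3' = e1 := by
  subst_vars
  have hy : 0 < y := hz.trans hzy
  have hx : 0 < x := hy.trans hyx
  refine ⟨?_, ?_, ?_⟩
  · exact cremona_sub_div_gcd_mul_eq hx hz hcop rfl d4
  · rw [mul_comm y z]
    refine cremona_sub_div_gcd_mul_eq hx hy ?_ ?_ d4
    · simpa [Nat.gcd_comm, Nat.gcd_left_comm, Nat.gcd_assoc] using hcop
    · rw [Nat.gcd_comm z y]; ring
  · rw [mul_comm x y, mul_comm x z]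
    refine cremona_sub_div_gcd_mul_eq hy hx ?_ ?_ d4
    · simpa [Nat.gcd_comm, Nat.gcd_left_comm, Nat.gcd_assoc] using hcop
    · rw [Nat.gcd_comm z x, Nat.gcd_comm y x]; ring

/-- The Cremona involution reverses the triple (e1,e2,e3). -/
theorem stmt_5 (x y z : ℕ) (hz : 0 < z) (hzy : z < y) (hyx : y < x)
    (hcop : Nat.gcd (Nat.gcd x y) z = 1)
    (d1 d2 d3 d4 e1 e2 e3 X' Y' Z' e1' e2' e3' : ℕ)
    (hd1 : d1 = Nat.gcd y z) (hd2 : d2 = Nat.gcd x z) (hd3 : d3 = Nat.gcd x y)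
    (hd4 : d4 = Nat.gcd (x - z) (y - z))
    (he1 : e1 = (y - z) / (d1 * d4)) (he2 : e2 = (x - z) / (d2 * d4))
    (he3 : e3 = (x - y) / (d3 * d4))
    (hX : X' = y * z / (d1 * d2 * d3)) (hY : Y' = x * z / (d1 * d2 * d3))
    (hZ : Z' = x * y / (d1 * d2 * d3))
    (he1' : e1' = (Y' - X') / (Nat.gcd X' Y' * d4))
    (he2' : e2' = (Z' - X') / (Nat.gcd X' Z' * d4))
    (he3' : e3' = (Z' - Y') / (Nat.gcd Y' Z' * d4)) :
    e1' = e3 ∧ e2' = e2 ∧ e3' = e1 :=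
  stmt_5_general x y z hz hzy hyx hcop d1 d2 d3 d4 e1 e2 e3 X' Y' Z' e1' e2' e3' hd1 hd2 hd3 he1 he2
    he3 hX hY hZ he1' he2' he3'
end

section
/- Let x > y > z > 0 be integers with gcd(x,y,z)=1, with d1, d2, d3, d4 and e1, e2, e3 as above. Then e1, e2, e3 are pairwise coprime positive integers. -/
/-!
Put a = y - z, c = x - y and b = x - z = a + c, so that d4 = gcd(b, a). Since a/d4 + c/d4 = b/d4
and gcd(a/d4, b/d4) = 1, the three quotients a/d4, b/d4, c/d4 are pairwise coprime.
Modulo d4 the numbers x, y, z all agree, so a common divisor of d4 and of any d_i divides each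
of x, y, z and is 1. Hence d_i * d4 divides the corresponding difference, and e_i is a positive
divisor of that difference divided by d4.
-/

namespace Nat

theorem coprime_gcd_of_modEq {x y z n : ℕ} (hcop : gcd (gcd x y) z = 1)
    (hx : x ≡ z [MOD n]) (hy : y ≡ z [MOD n]) :
    Coprime (gcd y z) n ∧ Coprime (gcd x z) n ∧ Coprime (gcd x y) n := by
  have eq_one : ∀ k, k ∣ n → k ∣ z → k = 1 := fun k hkn hkz =>
    eq_one_of_dvd_one <|
      hcop ▸ dvd_gcd (dvd_gcd ((hx.dvd_iff hkn).2 hkz) ((hy.dvd_iff hkn).2 hkz)) hkz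
  refine ⟨eq_one _ (gcd_dvd_right _ _) ((gcd_dvd_left _ _).trans (gcd_dvd_right _ _)),
    eq_one _ (gcd_dvd_right _ _) ((gcd_dvd_left _ _).trans (gcd_dvd_right _ _)),
    eq_one _ (gcd_dvd_right _ _) ?_⟩
  exact (hx.dvd_iff (gcd_dvd_right _ _)).1 ((gcd_dvd_left _ _).trans (gcd_dvd_left _ _))

theorem coprime_div_gcd_of_add_eq {a b c : ℕ} (habc : a + c = b) (hb : 0 < b) :
    Coprime (a / gcd b a) (b / gcd b a) ∧ Coprime (a / gcd b a) (c / gcd b a) ∧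
      Coprime (b / gcd b a) (c / gcd b a) := by
  subst habc
  have hba := coprime_div_gcd_div_gcd (gcd_pos_of_pos_left a hb)
  rw [Nat.add_div_of_dvd_right (gcd_dvd_right _ a)] at hba ⊢
  have hca : Coprime (c / gcd (a + c) a) (a / gcd (a + c) a) := coprime_self_add_left.1 hba
  exact ⟨hba.symm, hca.symm, coprime_add_self_left.2 hca.symm⟩

theorem gcd_mul_dvd_sub {p q n : ℕ} (h : Coprime (gcd p q) n) (hqp : q ≤ p)
    (hpq : p ≡ q [MOD n]) : gcd p q * n ∣ p - q :=
  h.mul_dvd_of_dvd_of_dvd (Nat.dvd_sub (gcd_dvd_left p q) (gcd_dvd_right p q))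
    ((modEq_iff_dvd' hqp).1 hpq.symm)

theorem div_mul_dvd_div_right {m d n : ℕ} (h : d * n ∣ m) : m / (d * n) ∣ m / n := by
  rw [mul_comm] at h ⊢
  rw [← Nat.div_div_eq_div_mul]
  exact div_dvd_of_dvd (dvd_div_of_mul_dvd h)

theorem div_pos_of_dvd {m k : ℕ} (hm : 0 < m) (h : k ∣ m) : 0 < m / k :=
  Nat.div_pos_iff.2 ⟨pos_of_dvd_of_pos h hm, le_of_dvd hm h⟩

end Nat

theorem stmt_6_general (x y z : ℕ) (hzy : z < y) (hyx : y < x)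
    (hcop : Nat.gcd (Nat.gcd x y) z = 1)
    (d1 d2 d3 d4 e1 e2 e3 : ℕ)
    (hd1 : d1 = Nat.gcd y z) (hd2 : d2 = Nat.gcd x z) (hd3 : d3 = Nat.gcd x y)
    (hd4 : d4 = Nat.gcd (x - z) (y - z))
    (he1 : e1 = (y - z) / (d1 * d4)) (he2 : e2 = (x - z) / (d2 * d4))
    (he3 : e3 = (x - y) / (d3 * d4)) :
    0 < e1 ∧ 0 < e2 ∧ 0 < e3 ∧
    Nat.gcd e1 e2 = 1 ∧ Nat.gcd e1 e3 = 1 ∧ Nat.gcd e2 e3 = 1 := by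
  subst hd1 hd2 hd3 he1 he2 he3
  have hx : x ≡ z [MOD d4] :=
    ((Nat.modEq_iff_dvd' (by omega)).2 (hd4 ▸ Nat.gcd_dvd_left _ _)).symm
  have hy : y ≡ z [MOD d4] := ((Nat.modEq_iff_dvd' hzy.le).2 (hd4 ▸ Nat.gcd_dvd_right _ _)).symm
  obtain ⟨h14, h24, h34⟩ := Nat.coprime_gcd_of_modEq hcop hx hy
  have hq1 := Nat.gcd_mul_dvd_sub h14 hzy.le hy
  have hq2 := Nat.gcd_mul_dvd_sub h24 (by omega) hx
  have hq3 := Nat.gcd_mul_dvd_sub h34 hyx.le (hx.trans hy.symm)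
  obtain ⟨c12, c13, c23⟩ :=
    Nat.coprime_div_gcd_of_add_eq (a := y - z) (b := x - z) (c := x - y) (by omega) (by omega)
  rw [← hd4] at c12 c13 c23
  exact ⟨Nat.div_pos_of_dvd (by omega) hq1, Nat.div_pos_of_dvd (by omega) hq2,
    Nat.div_pos_of_dvd (by omega) hq3,
    c12.of_dvd (Nat.div_mul_dvd_div_right hq1) (Nat.div_mul_dvd_div_right hq2),
    c13.of_dvd (Nat.div_mul_dvd_div_right hq1) (Nat.div_mul_dvd_div_right hq3),
    c23.of_dvd (Nat.div_mul_dvd_div_right hq2) (Nat.div_mul_dvd_div_right hq3)⟩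

/-- The parameters e1, e2, e3 are pairwise coprime positive integers. -/
theorem stmt_6 (x y z : ℕ) (hz : 0 < z) (hzy : z < y) (hyx : y < x)
    (hcop : Nat.gcd (Nat.gcd x y) z = 1)
    (d1 d2 d3 d4 e1 e2 e3 : ℕ)
    (hd1 : d1 = Nat.gcd y z) (hd2 : d2 = Nat.gcd x z) (hd3 : d3 = Nat.gcd x y)
    (hd4 : d4 = Nat.gcd (x - z) (y - z))
    (he1 : e1 = (y - z) / (d1 * d4)) (he2 : e2 = (x - z) / (d2 * d4))
    (he3 : e3 = (x - y) / (d3 * d4)) :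
    0 < e1 ∧ 0 < e2 ∧ 0 < e3 ∧
    Nat.gcd e1 e2 = 1 ∧ Nat.gcd e1 e3 = 1 ∧ Nat.gcd e2 e3 = 1 :=
  stmt_6_general x y z hzy hyx hcop d1 d2 d3 d4 e1 e2 e3 hd1 hd2 hd3 hd4 he1 he2 he3
end

section
/- Let a, b, u, v be integers with 0 < −a < b, u, v > 0, gcd(a,b) = 1, gcd(u,v) = 1, and set x = ub+v, y = −ua+v, z = v. Then gcd(y, z) = gcd(a, v), gcd(x, z) = gcd(b, v), and gcd(x, y) = gcd(ub+v, a+b). -/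
theorem Int.gcd_mul_add_self_of_gcd_eq_one {u v : ℤ} (h : u.gcd v = 1) (a : ℤ) :
    (u * a + v).gcd v = a.gcd v := by
  rw [Int.gcd_add_self_left, Int.gcd_mul_right_left_of_gcd_eq_one h]

theorem stmt_8_general (a b u v x y z : ℤ)
    (hcuv : Int.gcd u v = 1)
    (hx : x = u * b + v) (hy : y = -(u * a) + v) (hz : z = v) :
    Int.gcd y z = Int.gcd a v ∧ Int.gcd x z = Int.gcd b v ∧
    Int.gcd x y = Int.gcd (u * b + v) (a + b) := by
  subst x y z
  refine ⟨?_, Int.gcd_mul_add_self_of_gcd_eq_one hcuv b, ?_⟩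
  · rw [show -(u * a) + v = u * -a + v by ring, Int.gcd_mul_add_self_of_gcd_eq_one hcuv,
      Int.neg_gcd]
  · -- y = x - u (a + b), and u is coprime to x because it is coprime to v.
    have hxu : (u * b + v).gcd u = 1 := by
      rw [Int.gcd_mul_left_add_left, Int.gcd_comm, hcuv]
    rw [show -(u * a) + v = u * b + v - u * (a + b) by ring, Int.gcd_self_sub_right,
      Int.gcd_mul_right_right_of_gcd_eq_one hxu]

/-- gcd identities for the parametrized point (ub+v, −ua+v, v). -/
theorem stmt_8 (a b u v x y z : ℤ)
    (ha : 0 < -a) (hab : -a < b) (hu : 0 < u) (hv : 0 < v)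
    (hcab : Int.gcd a b = 1) (hcuv : Int.gcd u v = 1)
    (hx : x = u * b + v) (hy : y = -(u * a) + v) (hz : z = v) :
    Int.gcd y z = Int.gcd a v ∧ Int.gcd x z = Int.gcd b v ∧
    Int.gcd x y = Int.gcd (u * b + v) (a + b) :=
  stmt_8_general a b u v x y z hcuv hx hy hz
end

section
/- Let a, b be coprime integers with 0 < −a < b, let u be a positive integer, and let e1, e2, e3 be pairwise coprime positive integers with e1 ∣ −a, e2 ∣ b, e3 ∣ a+b; write e = e1e2e3 and suppose gcd(u, ab(a+b)/e) = 1. Fix integers p, q with pa + qb = 1. Then a positive integer v satisfies gcd(a,v) = −a/e1, gcd(b,v) = b/e2, gcd(−ua+v, a+b) = (a+b)/e3, and gcd(u,v) = 1 if and only if v ∈ {u(q−p)ab + (ab(a+b)/e)·n : n ∈ ℤ, gcd(n, ue) = 1}. -/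
/-!
Write -a = e₁A, b = e₂B, a + b = e₃C, so that ab(a+b)/e = -ABC. Since pa + qb = 1, the number
v₀ = u(q-p)ab is divisible by A and B and satisfies v₀ ≡ ua mod (a+b). Hence the gcd conditions
force v ≡ v₀ modulo the pairwise coprime A, B, C, i.e. v = v₀ - ABC·n. For v of this form
gcd(a, v) = A·gcd(e₁, n) because e₁ is coprime to BC, likewise for b and a + b, and
gcd(u, v) = gcd(u, n) because u is coprime to ABC; so the conditions say exactly that n is coprime
to u, e₁, e₂ and e₃.
-/

theorem IsCoprime.int_gcd_mul_left_cancel_right {m k : ℤ} (n : ℤ) (h : IsCoprime m k) :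
    Int.gcd m (k * n) = Int.gcd m n := by
  rw [Int.isCoprime_iff_nat_coprime] at h
  rw [Int.gcd_eq_natAbs, Int.gcd_eq_natAbs, Int.natAbs_mul]
  exact h.symm.gcd_mul_left_cancel_right _

theorem Int.gcd_mul_eq_of_dvd_add {d f c n v : ℤ} (hfc : IsCoprime f c)
    (hv : d * f ∣ v + d * c * n) : Int.gcd (d * f) v = d.natAbs * Int.gcd f n := by
  obtain ⟨k, hk⟩ := hv
  rw [show v = d * (-(c * n) + f * k) by linear_combination hk, Int.gcd_mul_left,
    Int.gcd_add_mul_left_right, Int.gcd_neg, hfc.int_gcd_mul_left_cancel_right]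

theorem Int.gcd_mul_eq_left_iff_of_dvd_add {d f c n v : ℤ} (hd : 0 < d) (hfc : IsCoprime f c)
    (hv : d * f ∣ v + d * c * n) : (Int.gcd (d * f) v : ℤ) = d ↔ IsCoprime f n := by
  rw [Int.gcd_mul_eq_of_dvd_add hfc hv, Int.isCoprime_iff_gcd_eq_one, Nat.cast_mul,
    Int.natAbs_of_nonneg hd.le, mul_eq_left₀ hd.ne', Nat.cast_eq_one]

theorem IsCoprime.of_dvd_of_dvd {R : Type*} [CommSemiring R] {x y x' y' : R}
    (h : IsCoprime x y) (hx : x' ∣ x) (hy : y' ∣ y) : IsCoprime x' y' :=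
  (h.of_isCoprime_of_dvd_left hx).of_isCoprime_of_dvd_right hy

theorem IsCoprime.add_self_right {R : Type*} [CommRing R] {x y : R} (h : IsCoprime x y) :
    IsCoprime x (x + y) := by
  simpa [add_comm] using h.add_mul_left_right 1

section

variable {a b u p q e1 e2 e3 A B C v : ℤ}

theorem gcd_conditions_iff_isCoprime {n : ℤ} (hab : IsCoprime a b) (hpq : p * a + q * b = 1)
    (ha : -a = e1 * A) (hb : b = e2 * B) (hc : a + b = e3 * C)
    (hA : 0 < A) (hB : 0 < B) (hC : 0 < C) (hu : IsCoprime u (A * B * C))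
    (hv : v = u * (q - p) * a * b - A * B * C * n) :
    ((Int.gcd a v : ℤ) = A ∧ (Int.gcd b v : ℤ) = B ∧
      (Int.gcd (-(u * a) + v) (a + b) : ℤ) = C ∧ Int.gcd u v = 1) ↔
    IsCoprime n (u * (e1 * e2 * e3)) := by
  have hac : IsCoprime a (a + b) := hab.add_self_right
  have hbc : IsCoprime b (a + b) := by simpa [add_comm] using hab.symm.add_self_right
  have gcd_a : (Int.gcd a v : ℤ) = A ↔ IsCoprime e1 n := by
    rw [← Int.neg_gcd, ha, mul_comm]
    refine Int.gcd_mul_eq_left_iff_of_dvd_add (c := B * C) hA ?_ ⟨-(u * (q - p) * b), ?_⟩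
    · exact (hab.mul_right hac).of_dvd_of_dvd ⟨-A, by linear_combination -ha⟩
        (mul_dvd_mul ⟨e2, by linear_combination hb⟩ ⟨e3, by linear_combination hc⟩)
    · linear_combination hv - u * (q - p) * b * ha
  have gcd_b : (Int.gcd b v : ℤ) = B ↔ IsCoprime e2 n := by
    rw [hb, mul_comm]
    refine Int.gcd_mul_eq_left_iff_of_dvd_add (c := A * C) hB ?_ ⟨u * (q - p) * a, ?_⟩
    · exact (hab.symm.mul_right hbc).of_dvd_of_dvd ⟨B, hb⟩
        (mul_dvd_mul ⟨-e1, by linear_combination -ha⟩ ⟨e3, by linear_combination hc⟩)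
    · linear_combination hv + u * (q - p) * a * hb
  have gcd_c : (Int.gcd (-(u * a) + v) (a + b) : ℤ) = C ↔ IsCoprime e3 n := by
    rw [Int.gcd_comm, hc, mul_comm]
    refine Int.gcd_mul_eq_left_iff_of_dvd_add (c := A * B) hC ?_ ⟨-(u * a * p), ?_⟩
    · exact (hac.symm.mul_right hbc.symm).of_dvd_of_dvd ⟨C, hc⟩
        (mul_dvd_mul ⟨-e1, by linear_combination -ha⟩ ⟨e2, by linear_combination hb⟩)
    · linear_combination hv + u * a * hpq - u * a * p * hc
  have gcd_u : Int.gcd u v = 1 ↔ IsCoprime u n := by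
    rw [hv, show u * (q - p) * a * b - A * B * C * n = -(A * B * C * n) + u * ((q - p) * a * b)
      by ring, Int.gcd_add_mul_left_right, Int.gcd_neg, hu.int_gcd_mul_left_cancel_right,
      Int.isCoprime_iff_gcd_eq_one]
  rw [gcd_a, gcd_b, gcd_c, gcd_u]
  simp only [IsCoprime.mul_right_iff, isCoprime_comm (y := n)]
  tauto

theorem dvd_sub_of_gcd_conditions (hab : IsCoprime a b) (hpq : p * a + q * b = 1)
    (ha : -a = e1 * A) (hb : b = e2 * B) (hc : a + b = e3 * C)
    (h : (Int.gcd a v : ℤ) = A ∧ (Int.gcd b v : ℤ) = B ∧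
      (Int.gcd (-(u * a) + v) (a + b) : ℤ) = C) :
    A * B * C ∣ v - u * (q - p) * a * b := by
  obtain ⟨g1, g2, g3⟩ := h
  have hAa : A ∣ a := ⟨-e1, by linear_combination -ha⟩
  have hBb : B ∣ b := ⟨e2, by linear_combination hb⟩
  have hCab : C ∣ a + b := ⟨e3, by linear_combination hc⟩
  have hA : A ∣ v - u * (q - p) * a * b :=
    (g1 ▸ Int.gcd_dvd_right a v).sub ((hAa.mul_left _).mul_right _)
  have hB : B ∣ v - u * (q - p) * a * b :=
    (g2 ▸ Int.gcd_dvd_right b v).sub (hBb.mul_left _)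
  have hC : C ∣ v - u * (q - p) * a * b := by
    rw [show v - u * (q - p) * a * b = (-(u * a) + v) + u * a * p * (a + b) by
      linear_combination (-(u * a)) * hpq]
    exact (g3 ▸ Int.gcd_dvd_left _ _).add (hCab.mul_left _)
  have hac : IsCoprime a (a + b) := hab.add_self_right
  have hbc : IsCoprime b (a + b) := by simpa [add_comm] using hab.symm.add_self_right
  exact IsCoprime.mul_dvd ((hac.mul_left hbc).of_dvd_of_dvd (mul_dvd_mul hAa hBb) hCab)
    ((hab.of_dvd_of_dvd hAa hBb).mul_dvd hA hB) hC

theorem gcd_conditions_iff_exists (hab : IsCoprime a b) (hpq : p * a + q * b = 1)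
    (ha : -a = e1 * A) (hb : b = e2 * B) (hc : a + b = e3 * C)
    (hA : 0 < A) (hB : 0 < B) (hC : 0 < C) (hu : IsCoprime u (A * B * C)) :
    ((Int.gcd a v : ℤ) = A ∧ (Int.gcd b v : ℤ) = B ∧
      (Int.gcd (-(u * a) + v) (a + b) : ℤ) = C ∧ Int.gcd u v = 1) ↔
    ∃ n, v = u * (q - p) * a * b - A * B * C * n ∧ IsCoprime n (u * (e1 * e2 * e3)) := by
  constructor
  · intro h
    obtain ⟨m, hm⟩ := dvd_sub_of_gcd_conditions hab hpq ha hb hc ⟨h.1, h.2.1, h.2.2.1⟩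
    have hv : v = u * (q - p) * a * b - A * B * C * -m := by linear_combination hm
    exact ⟨-m, hv, (gcd_conditions_iff_isCoprime hab hpq ha hb hc hA hB hC hu hv).mp h⟩
  · rintro ⟨n, hv, hn⟩
    exact (gcd_conditions_iff_isCoprime hab hpq ha hb hc hA hB hC hu hv).mpr hn

end

theorem stmt_12_general (a b u e1 e2 e3 e p q : ℤ)
    (ha : 0 < -a) (hab : -a < b) (hcab : Int.gcd a b = 1)
    (he1 : 0 < e1) (he2 : 0 < e2) (he3 : 0 < e3)
    (hd1 : e1 ∣ -a) (hd2 : e2 ∣ b) (hd3 : e3 ∣ a + b)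
    (he : e = e1 * e2 * e3)
    (hue : Int.gcd u (a * b * (a + b) / e) = 1)
    (hpq : p * a + q * b = 1) :
    ∀ v : ℤ, 0 < v →
      (((Int.gcd a v : ℤ) = -a / e1 ∧ (Int.gcd b v : ℤ) = b / e2 ∧
        (Int.gcd (-(u * a) + v) (a + b) : ℤ) = (a + b) / e3 ∧ Int.gcd u v = 1) ↔
      (∃ n : ℤ, v = u * (q - p) * a * b + (a * b * (a + b) / e) * n ∧
        Int.gcd n (u * e) = 1)) := by
  obtain ⟨A, hA⟩ := hd1
  obtain ⟨B, hB⟩ := hd2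
  obtain ⟨C, hC⟩ := hd3
  have hA0 : 0 < A := pos_of_mul_pos_right (hA ▸ ha) he1.le
  have hB0 : 0 < B := pos_of_mul_pos_right (hB ▸ ha.trans hab) he2.le
  have hC0 : 0 < C := pos_of_mul_pos_right (hC ▸ (by linarith : 0 < a + b)) he3.le
  have hM : a * b * (a + b) / e = -(A * B * C) := by
    rw [show a * b * (a + b) = e * -(A * B * C) by
        rw [hC, hB, show a = -(e1 * A) by linarith, he]; ring,
      Int.mul_ediv_cancel_left _ (by rw [he]; positivity)]
  have hu : IsCoprime u (A * B * C) := by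
    rwa [hM, Int.gcd_neg, ← Int.isCoprime_iff_gcd_eq_one] at hue
  have hAdiv : -a / e1 = A := by rw [hA, Int.mul_ediv_cancel_left _ he1.ne']
  have hBdiv : b / e2 = B := by rw [hB, Int.mul_ediv_cancel_left _ he2.ne']
  have hCdiv : (a + b) / e3 = C := by rw [hC, Int.mul_ediv_cancel_left _ he3.ne']
  intro v _
  rw [hAdiv, hBdiv, hCdiv, hM, he,
    gcd_conditions_iff_exists (Int.isCoprime_iff_gcd_eq_one.mpr hcab) hpq hA hB hC hA0 hB0 hC0 hu]
  simp only [neg_mul, ← sub_eq_add_neg, Int.isCoprime_iff_gcd_eq_one]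

/-- Characterization of the admissible values of v as a coprimality-restricted
arithmetic progression. -/
theorem stmt_12 (a b u e1 e2 e3 e p q : ℤ)
    (ha : 0 < -a) (hab : -a < b) (hcab : Int.gcd a b = 1) (hu : 0 < u)
    (he1 : 0 < e1) (he2 : 0 < e2) (he3 : 0 < e3)
    (h12 : Int.gcd e1 e2 = 1) (h13 : Int.gcd e1 e3 = 1) (h23 : Int.gcd e2 e3 = 1)
    (hd1 : e1 ∣ -a) (hd2 : e2 ∣ b) (hd3 : e3 ∣ a + b)
    (he : e = e1 * e2 * e3)
    (hue : Int.gcd u (a * b * (a + b) / e) = 1)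
    (hpq : p * a + q * b = 1) :
    ∀ v : ℤ, 0 < v →
      (((Int.gcd a v : ℤ) = -a / e1 ∧ (Int.gcd b v : ℤ) = b / e2 ∧
        (Int.gcd (-(u * a) + v) (a + b) : ℤ) = (a + b) / e3 ∧ Int.gcd u v = 1) ↔
      (∃ n : ℤ, v = u * (q - p) * a * b + (a * b * (a + b) / e) * n ∧
        Int.gcd n (u * e) = 1)) :=
  stmt_12_general a b u e1 e2 e3 e p q ha hab hcab he1 he2 he3 hd1 hd2 hd3 he hue hpq
end

section
/- For a point [x:y:z] of ℙ¹×ℙ¹×ℙ¹-embedded type on the degree-6 del Pezzo surface with x,y,z positive integers, gcd(x,y,z)=1, written via the parametrization x = ub+v, y = −ua+v, z = v (with 0 < −a < b, gcd(a,b)=1, gcd(u,v)=1, u,v > 0), the anticanonical height satisfies H = (ub+v)²·(−ua+v)/(gcd(a,v)·gcd(b,v)·gcd(ub+v, a+b)). -/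
/-! For z ≤ y ≤ x the numerator of the height is x²y, and every pairwise gcd of the coordinates
reduces, by Euclidean steps and cancelling the factor u (coprime to v, hence to x), to a gcd
in the parameters: gcd(x, z) = gcd(b, v), gcd(y, z) = gcd(a, v) and, since x - y = u(a + b),
gcd(x, y) = gcd(x, a + b). -/

namespace Int

theorem gcd_mul_add_left_of_gcd_eq_one {u v : ℤ} (b : ℤ) (huv : gcd u v = 1) :
    gcd (u * b + v) v = gcd b v := by
  rw [gcd_add_self_left, gcd_mul_right_left_of_gcd_eq_one huv]

theorem gcd_mul_add_neg_mul_add_of_gcd_eq_one {u v : ℤ} (a b : ℤ) (huv : gcd u v = 1) :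
    gcd (u * b + v) (-(u * a) + v) = gcd (u * b + v) (a + b) := by
  have hux : gcd u (u * b + v) = 1 := by
    rw [add_comm, gcd_add_mul_left_right, huv]
  calc gcd (u * b + v) (-(u * a) + v)
      = gcd (u * b + v) (-(u * (a + b)) + (u * b + v) * 1) := by ring_nf
    _ = gcd (u * (a + b)) (u * b + v) := by rw [gcd_add_mul_left_right, gcd_neg, gcd_comm]
    _ = gcd (u * b + v) (a + b) := by rw [gcd_mul_right_left_of_gcd_eq_one hux, gcd_comm]

end Int

theorem max_mul_max_mul_max_of_le {x y z : ℤ} (hyx : y ≤ x) (hzy : z ≤ y) :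
    max x y * max y z * max x z = x ^ 2 * y := by
  rw [max_eq_left hyx, max_eq_left hzy, max_eq_left (hzy.trans hyx)]
  ring

theorem stmt_17_general (a b u v x y z : ℤ)
    (ha : 0 < -a) (hab : -a < b) (hu : 0 < u)
    (hcuv : Int.gcd u v = 1)
    (hx : x = u * b + v) (hy : y = -(u * a) + v) (hz : z = v) :
    ((max x y * max y z * max x z : ℤ) : ℚ) /
        ((Int.gcd x y * Int.gcd y z * Int.gcd x z : ℕ) : ℚ)
      = (((u * b + v) ^ 2 * (-(u * a) + v) : ℤ) : ℚ) /
        ((Int.gcd a v * Int.gcd b v * Int.gcd (u * b + v) (a + b) : ℕ) : ℚ) := by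
  subst x y z
  have hyx : -(u * a) + v ≤ u * b + v := by nlinarith
  have hzy : v ≤ -(u * a) + v := by nlinarith
  have hgyz : Int.gcd (-(u * a) + v) v = Int.gcd a v := by
    rw [← mul_neg, Int.gcd_mul_add_left_of_gcd_eq_one _ hcuv, Int.neg_gcd]
  rw [max_mul_max_mul_max_of_le hyx hzy, Int.gcd_mul_add_neg_mul_add_of_gcd_eq_one a b hcuv,
    hgyz, Int.gcd_mul_add_left_of_gcd_eq_one b hcuv]
  push_cast
  ring

/-- The anticanonical height in terms of the line parametrization x = ub+v,
y = −ua+v, z = v. -/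
theorem stmt_17 (a b u v x y z : ℤ)
    (ha : 0 < -a) (hab : -a < b) (hu : 0 < u) (hv : 0 < v)
    (hcab : Int.gcd a b = 1) (hcuv : Int.gcd u v = 1)
    (hx : x = u * b + v) (hy : y = -(u * a) + v) (hz : z = v) :
    ((max x y * max y z * max x z : ℤ) : ℚ) /
        ((Int.gcd x y * Int.gcd y z * Int.gcd x z : ℕ) : ℚ)
      = (((u * b + v) ^ 2 * (-(u * a) + v) : ℤ) : ℚ) /
        ((Int.gcd a v * Int.gcd b v * Int.gcd (u * b + v) (a + b) : ℕ) : ℚ) :=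
  stmt_17_general a b u v x y z ha hab hu hcuv hx hy hz
end
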